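/- Consider the lower-bound construction with integers u > d ≥ 1 and real 0 < α < 1. Then er_{D_h}(h) = (1-α)·d/u, and for every g ∈ H one has er_{D_h}(g) ≥ (1-α)·d/u, with equality if and only if g = h; in particular h is the unique minimizer of er_{D_h} over H. -/

import Mathlib

open MeasureTheory

abbrev Label : Type := ↥({-1, 1} : Finset ℤ)

def lneg : Label := ⟨-1, by decide⟩
def lpos : Label := ⟨1, by decide⟩

noncomputable def erD {X : Type*} [MeasurableSpace X]
    (D : Measure (X × Label)) (h : X → Label) : ℝ :=
  (D {p | h p.1 ≠ p.2}).toReal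

/-- The distribution `D_h` of the lower-bound construction: every example is labeled `1`;
a point `i` with `h i = -1` has probability `(1-α)/u`, and a point `i` with `h i = 1`
has probability `(1-(1-α)d/u)/(u-d)`. -/
noncomputable def Dh (u d : ℕ) (α : ℝ) (h : Fin u → Label) : Measure (Fin u × Label) :=
  Measure.sum fun i : Fin u =>
    (ENNReal.ofReal (if h i = lneg then (1 - α) / (u : ℝ)
        else (1 - (1 - α) * (d : ℝ) / (u : ℝ)) / ((u : ℝ) - (d : ℝ)))) •
      Measure.dirac (i, lpos)

/-- Membership in the hypothesis class of the lower-bound construction: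
`h` takes the value `-1` on exactly `d` points. -/
def memH (u d : ℕ) (h : Fin u → Label) : Prop :=
  (Finset.univ.filter fun i => h i = lneg).card = d

/-!
The error of `g` under `D_h` is the mass of the `d` points that `g` labels `-1`. Such a point
weighs `a = (1-α)/u` if `h` labels it `-1` too, and `b > a` otherwise. As `g` and `h` both label
exactly `d` points `-1`, the error is `d a + k (b - a)`, where `k` counts the points labelled `-1`
by `g` but not by `h`; it is minimal exactly when `k = 0`, i.e. when the two sets coincide.
-/

lemma eq_lneg_or_eq_lpos : ∀ x : Label, x = lneg ∨ x = lpos := by decide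

section WeightedCount

variable {ι R : Type*} [DecidableEq ι] [CommRing R] {A B : Finset ι} {a b : R}

lemma sum_ite_mem_eq_of_card_eq (hcard : B.card = A.card) :
    ∑ i ∈ B, (if i ∈ A then a else b) = A.card * a + (B \ A).card * (b - a) := by
  have hsplit := Finset.card_inter_add_card_sdiff B A
  rw [Finset.sum_ite, Finset.filter_mem_eq_inter, Finset.filter_notMem_eq_sdiff,
    Finset.sum_const, Finset.sum_const, nsmul_eq_mul, nsmul_eq_mul, ← hcard, ← hsplit]
  push_cast
  ring

variable [LinearOrder R] [IsStrictOrderedRing R]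

lemma card_mul_le_sum_ite_mem (hcard : B.card = A.card) (hab : a ≤ b) :
    A.card * a ≤ ∑ i ∈ B, if i ∈ A then a else b := by
  rw [sum_ite_mem_eq_of_card_eq hcard]
  have : (0 : R) ≤ (B \ A).card * (b - a) := by
    have := sub_nonneg.mpr hab
    positivity
  linarith

lemma sum_ite_mem_eq_card_mul_iff (hcard : B.card = A.card) (hab : a < b) :
    ∑ i ∈ B, (if i ∈ A then a else b) = A.card * a ↔ B = A := by
  rw [sum_ite_mem_eq_of_card_eq hcard, add_eq_left, mul_eq_zero, sub_eq_zero,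
    or_iff_left hab.ne', Nat.cast_eq_zero, Finset.card_eq_zero, Finset.sdiff_eq_empty_iff_subset]
  exact ⟨fun hsub => Finset.eq_of_subset_of_card_le hsub hcard.ge, fun h => h.le⟩

end WeightedCount

section Error

variable {X : Type*} [Fintype X]

def negPoints (g : X → Label) : Finset X := {i | g i = lneg}

lemma negPoints_injective : Function.Injective (negPoints : (X → Label) → Finset X) := by
  intro g h hgh
  funext i
  have hi : g i = lneg ↔ h i = lneg := by
    simpa [negPoints] using congrArg (i ∈ ·) hgh
  rcases eq_lneg_or_eq_lpos (g i) with hg | hg <;>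
    rcases eq_lneg_or_eq_lpos (h i) with hh | hh <;> simp_all [lneg, lpos]

variable [MeasurableSpace X] [MeasurableSingletonClass X]

lemma erD_sum_smul_dirac_lpos (w : X → ℝ) (hw : ∀ i, 0 ≤ w i) (g : X → Label) :
    erD (Measure.sum fun i => ENNReal.ofReal (w i) • Measure.dirac (i, lpos)) g =
      ∑ i ∈ negPoints g, w i := by
  have hterm : ∀ i, (ENNReal.ofReal (w i) • Measure.dirac (i, lpos)) {p | g p.1 ≠ p.2} =
      ENNReal.ofReal (if g i = lneg then w i else 0) := by
    intro i
    rcases eq_lneg_or_eq_lpos (g i) with hg | hg <;>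
      simp [Measure.dirac_apply, hg, lneg, lpos]
  have hnonneg : ∀ i, 0 ≤ if g i = lneg then w i else 0 := fun i => by
    split_ifs
    exacts [hw i, le_rfl]
  rw [erD, Measure.sum_apply_of_countable, tsum_fintype, Finset.sum_congr rfl fun i _ => hterm i,
    ← ENNReal.ofReal_sum_of_nonneg fun i _ => hnonneg i,
    ENNReal.toReal_ofReal (Finset.sum_nonneg fun i _ => hnonneg i), negPoints, Finset.sum_filter]

end Error

lemma lneg_weight_lt_lpos_weight {u d : ℕ} {α : ℝ} (hα : 0 < α) (hdu : d < u) :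
    (1 - α) / u < (1 - (1 - α) * d / u) / (u - d) := by
  have hu : (0 : ℝ) < u := by exact_mod_cast d.zero_le.trans_lt hdu
  have hdu' : (0 : ℝ) < u - d := sub_pos.mpr (by exact_mod_cast hdu)
  have hexpand : (1 - α) / u * (u - d) = (1 - α) - (1 - α) * d / u := by
    field_simp
  rw [lt_div_iff₀ hdu', hexpand]
  linarith

lemma erD_Dh {u d : ℕ} {α : ℝ} (hdu : d ≤ u) (hα0 : 0 ≤ α) (hα1 : α ≤ 1) (h g : Fin u → Label) :
    erD (Dh u d α h) g = ∑ i ∈ negPoints g,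
      if i ∈ negPoints h then (1 - α) / u else (1 - (1 - α) * d / u) / (u - d) := by
  have hα : 0 ≤ 1 - α := sub_nonneg.mpr hα1
  have hd : (0 : ℝ) ≤ u - d := sub_nonneg.mpr (by exact_mod_cast hdu)
  have hlpos : 0 ≤ 1 - (1 - α) * d / u := by
    refine sub_nonneg.mpr (div_le_one_of_le₀ ?_ (Nat.cast_nonneg u))
    calc (1 - α) * d ≤ d := mul_le_of_le_one_left (Nat.cast_nonneg d) (by linarith)
      _ ≤ u := by exact_mod_cast hdu
  rw [Dh, erD_sum_smul_dirac_lpos]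
  · simp [negPoints]
  · intro i
    split_ifs
    exacts [div_nonneg hα (Nat.cast_nonneg u), div_nonneg hlpos hd]

theorem h_unique_minimizer_general (u d : ℕ) (α : ℝ) (h : Fin u → Label)
    (hdu : d < u) (hα0 : 0 < α) (hα1 : α < 1) (hh : memH u d h) :
    erD (Dh u d α h) h = (1 - α) * (d : ℝ) / (u : ℝ) ∧
      ∀ g : Fin u → Label, memH u d g →
        (1 - α) * (d : ℝ) / (u : ℝ) ≤ erD (Dh u d α h) g ∧
          (erD (Dh u d α h) g = (1 - α) * (d : ℝ) / (u : ℝ) ↔ g = h) := by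
  have herr := erD_Dh hdu.le hα0.le hα1.le h
  have hab := lneg_weight_lt_lpos_weight hα0 hdu
  -- hides the occurrence of `(1 - α) * d / u` inside `b` from the rewrites with `hmin` below
  set b : ℝ := (1 - (1 - α) * d / u) / (u - d)
  have hmin : (negPoints h).card * ((1 - α) / u) = (1 - α) * (d : ℝ) / (u : ℝ) := by
    rw [show (negPoints h).card = d from hh]
    ring
  refine ⟨?_, fun g hg => ?_⟩
  · rw [herr, ← hmin, sum_ite_mem_eq_card_mul_iff rfl hab]
  · have hcard : (negPoints g).card = (negPoints h).card := hg.trans hh.symm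
    rw [herr, ← hmin, sum_ite_mem_eq_card_mul_iff hcard hab, negPoints_injective.eq_iff]
    exact ⟨card_mul_le_sum_ite_mem hcard hab.le, Iff.rfl⟩

/-- under `D_h`, the hypothesis `h` has error exactly `(1-α)d/u`, and it is
the unique minimizer of the error over the class `H`. -/
theorem h_unique_minimizer (u d : ℕ) (α : ℝ) (h : Fin u → Label)
    (hd : 1 ≤ d) (hdu : d < u) (hα0 : 0 < α) (hα1 : α < 1) (hh : memH u d h) :
    erD (Dh u d α h) h = (1 - α) * (d : ℝ) / (u : ℝ) ∧
      ∀ g : Fin u → Label, memH u d g →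
        (1 - α) * (d : ℝ) / (u : ℝ) ≤ erD (Dh u d α h) g ∧
          (erD (Dh u d α h) g = (1 - α) * (d : ℝ) / (u : ℝ) ↔ g = h) :=
  h_unique_minimizer_general u d α h hdu hα0 hα1 hh
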